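/- Let V be a normal supervisor on the plant G, let the attack constraint be normal (Σ_{c,A} ⊆ Σ_{o,A}), and suppose AP_dmg ≠ ∅. Then for every successful attacker A, L(V_A/G) ⊆ L(V_{A^sup}/G); in particular, L(V_A/G) ⊆ L(V/G) ∪ ⋃_{(s,σ)∈AP_dmg} En(s, σ). -/

import Mathlib

open scoped Classical

namespace ActuatorAttack

variable {A : Type*}

/-- Natural projection onto a sub-alphabet `S`: erase the letters not in `S`. -/
noncomputable def proj (S : Set A) (l : List A) : List A :=
  l.filter (fun a => decide (a ∈ S))

/-- The least language containing `ε` and closed under appending an event `σ`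
allowed by `allow` at `s`, provided the result lies in the plant language `LG`. -/
inductive Lang (LG : Set (List A)) (allow : List A → Set A) : List A → Prop
  | nil : Lang LG allow []
  | snoc {s : List A} {σ : A} : Lang LG allow s → σ ∈ allow s →
      (s ++ [σ]) ∈ LG → Lang LG allow (s ++ [σ])

/-- The closed-loop language `L(V/G)`. -/
def LVG (LG : Set (List A)) (So : Set A) (V : List A → Set A) :
    Set (List A) :=
  {s | Lang LG (fun t => V (proj So t)) s}

/-- Auxiliary function for the attacker-observation map: `pre` is the prefix
of the supervisor observation sequence already processed. -/
noncomputable def phatAux (V : List A → Set A) (SoA : Set A) :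
    List A → List A → List (List A × Set A)
  | _, [] => []
  | pre, σ :: rest =>
      (proj SoA [σ], V (pre ++ [σ])) :: phatAux V SoA (pre ++ [σ]) rest

/-- The attacker-observation map `P̂`: the i-th letter of `P̂(σ₁⋯σₙ)` is
`(P_{o,A}(σᵢ), V(σ₁⋯σᵢ))`. -/
noncomputable def phat (V : List A → Set A) (SoA : Set A) (w : List A) :
    List (List A × Set A) :=
  phatAux V SoA [] w

/-- The attacked supervisor `V_A`. -/
noncomputable def VA (V : List A → Set A) (ScA SoA : Set A)
    (Att : List (List A × Set A) → Set A) (w : List A) : Set A :=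
  (V w \ ScA) ∪ Att (phat V SoA w)

/-- The attacked closed-loop language `L(V_A/G)`. -/
def LVAG (LG : Set (List A)) (So : Set A) (V : List A → Set A)
    (ScA SoA : Set A) (Att : List (List A × Set A) → Set A) : Set (List A) :=
  {s | Lang LG (fun t =>
      {σ | proj So t ∈ proj So '' LVG LG So V ∧
           σ ∈ VA V ScA SoA Att (proj So t)}) s}

/-- An attacker is enabling if it enables every attackable event enabled by
the supervisor. -/
def Enabling (LG : Set (List A)) (So : Set A) (V : List A → Set A)
    (ScA SoA : Set A) (Att : List (List A × Set A) → Set A) : Prop :=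
  ∀ w ∈ proj So '' LVG LG So V, V w ∩ ScA ⊆ Att (phat V SoA w)

/-- An attacker is successful if the attacked closed-loop language meets the
damage set, and everything outside `P_o⁻¹(P_o(L(V/G)))` lies in `L_dmg·Σ*`. -/
def Successful (LG : Set (List A)) (So : Set A) (V : List A → Set A)
    (ScA SoA : Set A) (Att : List (List A × Set A) → Set A)
    (Ldmg : Set (List A)) : Prop :=
  (LVAG LG So V ScA SoA Att ∩ Ldmg).Nonempty ∧
  LVAG LG So V ScA SoA Att \ (proj So ⁻¹' (proj So '' LVG LG So V)) ⊆
    {t | ∃ d ∈ Ldmg, d <+: t}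

/-- `(s, σ)` is an attack pair. -/
def AttackPair (LG : Set (List A)) (So : Set A) (V : List A → Set A)
    (ScA SoA : Set A) (Ldmg : Set (List A)) (s : List A) (σ : A) : Prop :=
  s ∈ LVG LG So V ∧ σ ∈ ScA ∧ s ++ [σ] ∈ Ldmg ∧
  ∀ s' ∈ LVG LG So V,
    phat V SoA (proj So s) = phat V SoA (proj So s') →
    s' ++ [σ] ∈ LG → s' ++ [σ] ∈ Ldmg

/-- `En(s, σ)`: one-step `σ`-extensions in `L(G)` of strings of `L(V/G)` that
are attacker-observation equivalent to `s`. -/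
def En (LG : Set (List A)) (So : Set A) (V : List A → Set A)
    (SoA : Set A) (s : List A) (σ : A) : Set (List A) :=
  {t | ∃ s' ∈ LVG LG So V, t = s' ++ [σ] ∧ t ∈ LG ∧
       phat V SoA (proj So s) = phat V SoA (proj So s')}

/-- `I(ŵ)`: attackable events `σ` such that some string `s'` of `L(V/G)` with
attacker observation `ŵ` forms an attack pair `(s', σ)`. -/
def ISet (LG : Set (List A)) (So : Set A) (V : List A → Set A)
    (ScA SoA : Set A) (Ldmg : Set (List A))
    (w : List (List A × Set A)) : Set A :=
  {σ | σ ∈ ScA ∧ ∃ s' ∈ LVG LG So V,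
        phat V SoA (proj So s') = w ∧ AttackPair LG So V ScA SoA Ldmg s' σ}

/-- The supremal attacker `A^sup`. -/
def Asup (LG : Set (List A)) (So : Set A) (V : List A → Set A)
    (ScA SoA : Set A) (Ldmg : Set (List A))
    (w : List (List A × Set A)) : Set A :=
  {σ | ∃ s ∈ LVG LG So V, phat V SoA (proj So s) = w ∧
        σ ∈ V (proj So s) ∩ ScA} ∪
  ISet LG So V ScA SoA Ldmg w

/-!
Along any run of the attacked closed loop, every attackable event that occurs was enabled by the
attacker at that moment. Since attackable events are visible to the attacker, this property of an
observation depends only on its attacker observation `P̂`. Hence if the attacker enables some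
`σ ∉ V(P_o s)` after `s ∈ L(V/G)`, it enables `σ` after every `s' ∈ L(V/G)` with the same
attacker observation, and each such `s'` is reachable under attack. The string `s'σ` then leaves
`P_o⁻¹(P_o(L(V/G)))`, so success forces `s'σ ∈ L_dmg` (no proper prefix of `s'σ` is damaging,
as those lie in `L(V/G)`): `(s, σ)` is an attack pair. Thus every attacked step is either a step
of `V`, which `A^sup` keeps, or an attack-pair step, which `A^sup` enables.
-/

variable {So SoA ScA : Set A} {LG Ldmg : Set (List A)} {V : List A → Set A}
  {Att : List (List A × Set A) → Set A}

lemma proj_append (S : Set A) (l₁ l₂ : List A) :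
    proj S (l₁ ++ l₂) = proj S l₁ ++ proj S l₂ := by
  simp [proj]

lemma proj_concat_of_mem {S : Set A} (l : List A) {σ : A} (h : σ ∈ S) :
    proj S (l ++ [σ]) = proj S l ++ [σ] := by
  simp [proj, h]

lemma proj_concat_of_notMem {S : Set A} (l : List A) {σ : A} (h : σ ∉ S) :
    proj S (l ++ [σ]) = proj S l := by
  simp [proj, h]

lemma eq_of_proj_singleton_eq {S : Set A} {σ σ' : A} (hσ' : σ' ∈ S)
    (h : proj S [σ] = proj S [σ']) : σ = σ' := by
  by_cases hσ : σ ∈ S <;> simp_all [proj]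

lemma Lang.of_prefix {allow : List A → Set A} {s u : List A} (h : Lang LG allow s)
    (hu : u <+: s) : Lang LG allow u := by
  induction h with
  | nil => rw [List.prefix_nil.mp hu]; exact .nil
  | snoc h₁ h₂ h₃ ih =>
    rcases List.prefix_concat_iff.mp hu with rfl | hu
    · exact .snoc h₁ h₂ h₃
    · exact ih hu

lemma mem_V_of_proj_eq_concat {u w : List A} {σ : A} (hu : u ∈ LVG LG So V)
    (h : proj So u = w ++ [σ]) : σ ∈ V w := by
  induction hu with
  | nil => simp [proj] at h
  | @snoc s τ _ hτ _ ih =>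
    by_cases hτo : τ ∈ So
    · rw [proj_concat_of_mem s hτo, List.append_singleton_inj] at h
      obtain ⟨rfl, rfl⟩ := h
      exact hτ
    · rw [proj_concat_of_notMem s hτo] at h
      exact ih h

lemma proj_concat_notMem_image {s : List A} {σ : A} (hσ : σ ∈ So)
    (hσV : σ ∉ V (proj So s)) : proj So (s ++ [σ]) ∉ proj So '' LVG LG So V := by
  rintro ⟨u, hu, hpu⟩
  exact hσV (mem_V_of_proj_eq_concat hu (hpu.trans (proj_concat_of_mem s hσ)))

@[simp]
lemma phat_nil : phat V SoA [] = [] := rfl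

lemma phatAux_append (pre w₁ w₂ : List A) :
    phatAux V SoA pre (w₁ ++ w₂) =
      phatAux V SoA pre w₁ ++ phatAux V SoA (pre ++ w₁) w₂ := by
  induction w₁ generalizing pre with
  | nil => simp [phatAux]
  | cons σ rest ih => simp [phatAux, ih]

lemma phat_concat (w : List A) (σ : A) :
    phat V SoA (w ++ [σ]) = phat V SoA w ++ [(proj SoA [σ], V (w ++ [σ]))] := by
  simp [phat, phatAux_append, phatAux]

lemma phatAux_take (pre w : List A) (k : ℕ) :
    phatAux V SoA pre (w.take k) = (phatAux V SoA pre w).take k := by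
  induction w generalizing pre k with
  | nil => simp [phatAux]
  | cons σ rest ih => cases k <;> simp [phatAux, ih]

lemma phat_take (w : List A) (k : ℕ) :
    phat V SoA (w.take k) = (phat V SoA w).take k :=
  phatAux_take [] w k

lemma phat_concat_inj {v v' : List A} {σ σ' : A}
    (h : phat V SoA (v ++ [σ]) = phat V SoA (v' ++ [σ'])) :
    phat V SoA v = phat V SoA v' ∧ proj SoA [σ] = proj SoA [σ'] ∧
      V (v ++ [σ]) = V (v' ++ [σ']) := by
  rwa [phat_concat, phat_concat, List.append_singleton_inj, Prod.mk.injEq] at h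

lemma V_eq_of_phat_eq {w w' : List A} (h : phat V SoA w = phat V SoA w') : V w = V w' := by
  rcases w.eq_nil_or_concat' with rfl | ⟨v, σ, rfl⟩ <;>
    rcases w'.eq_nil_or_concat' with rfl | ⟨v', σ', rfl⟩
  · rfl
  · simp [phat_concat] at h
  · simp [phat_concat] at h
  · exact (phat_concat_inj h).2.2

lemma exists_prefix_phat_eq {w w' u' : List A} (h : phat V SoA w = phat V SoA w')
    (hu' : u' <+: w') : ∃ u, u <+: w ∧ phat V SoA u = phat V SoA u' := by
  refine ⟨w.take u'.length, w.take_prefix _, ?_⟩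
  rw [phat_take, h, ← phat_take, ← List.prefix_iff_eq_take.mp hu']

def EnabledByAttacker (ScA SoA : Set A) (V : List A → Set A)
    (Att : List (List A × Set A) → Set A) (w : List A) : Prop :=
  ∀ v σ, v ++ [σ] <+: w → σ ∈ ScA → σ ∈ Att (phat V SoA v)

lemma EnabledByAttacker.of_phat_eq (hnormA : ScA ⊆ SoA) {w w' : List A}
    (hw : EnabledByAttacker ScA SoA V Att w) (h : phat V SoA w = phat V SoA w') :
    EnabledByAttacker ScA SoA V Att w' := by
  intro v' σ hv' hσ
  obtain ⟨u, hu, hphu⟩ := exists_prefix_phat_eq h hv'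
  rcases u.eq_nil_or_concat' with rfl | ⟨v, τ, rfl⟩
  · simp [phat_concat] at hphu
  · obtain ⟨hv, hτ, -⟩ := phat_concat_inj hphu
    obtain rfl := eq_of_proj_singleton_eq (hnormA hσ) hτ
    exact hv ▸ hw v τ hu hσ

lemma enabledByAttacker_of_mem_LVAG {t : List A} (ht : t ∈ LVAG LG So V ScA SoA Att) :
    EnabledByAttacker ScA SoA V Att (proj So t) := by
  induction ht with
  | nil => intro v σ hv; simp [proj] at hv
  | @snoc s σ _ hσ _ ih =>
    by_cases hσo : σ ∈ So
    · rw [proj_concat_of_mem s hσo]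
      intro v τ hv hτ
      rcases List.prefix_concat_iff.mp hv with h | h
      · obtain ⟨rfl, rfl⟩ := List.append_singleton_inj.mp h
        exact hσ.2.resolve_left (fun h' => h'.2 hτ)
      · exact ih v τ h hτ
    · rwa [proj_concat_of_notMem s hσo]

lemma mem_LVAG_of_mem_LVG (hso : ScA ⊆ So) {s : List A} (hs : s ∈ LVG LG So V)
    (he : EnabledByAttacker ScA SoA V Att (proj So s)) : s ∈ LVAG LG So V ScA SoA Att := by
  induction hs with
  | nil => exact .nil
  | @snoc s σ hs hσ hsσ ih =>
    have hpre : proj So s <+: proj So (s ++ [σ]) := by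
      rw [proj_append]; exact List.prefix_append _ _
    refine .snoc (ih fun v τ hv => he v τ (hv.trans hpre)) ⟨⟨s, hs, rfl⟩, ?_⟩ hsσ
    by_cases hσA : σ ∈ ScA
    · refine .inr (he _ σ ?_ hσA)
      rw [proj_concat_of_mem s (hso hσA)]
    · exact .inl ⟨hσ, hσA⟩

lemma mem_LVG_of_mem_LVAG (hAtt : ∀ x, Att x ⊆ ScA) (hso : ScA ⊆ So) {t : List A}
    (ht : t ∈ LVAG LG So V ScA SoA Att) (hobs : proj So t ∈ proj So '' LVG LG So V) :
    t ∈ LVG LG So V := by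
  induction ht with
  | nil => exact .nil
  | @snoc s σ _ hσ hsσ ih =>
    refine .snoc (ih hσ.1) ?_ hsσ
    rcases hσ.2 with hσV | hσA
    · exact hσV.1
    · obtain ⟨u, hu, hpu⟩ := hobs
      exact mem_V_of_proj_eq_concat hu (hpu.trans (proj_concat_of_mem s (hso (hAtt _ hσA))))

lemma mem_Ldmg_of_attacked_step (hso : ScA ⊆ So) (hLdV : Ldmg ∩ LVG LG So V = ∅)
    (hsucc : Successful LG So V ScA SoA Att Ldmg) {s : List A} {σ : A}
    (hs : s ∈ LVG LG So V) (he : EnabledByAttacker ScA SoA V Att (proj So s))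
    (hσA : σ ∈ Att (phat V SoA (proj So s))) (hσ : σ ∈ ScA) (hσV : σ ∉ V (proj So s))
    (hsσ : s ++ [σ] ∈ LG) : s ++ [σ] ∈ Ldmg := by
  have hmem : s ++ [σ] ∈ LVAG LG So V ScA SoA Att :=
    .snoc (mem_LVAG_of_mem_LVG hso hs he) ⟨⟨s, hs, rfl⟩, .inr hσA⟩ hsσ
  obtain ⟨d, hd, hds⟩ := hsucc.2 ⟨hmem, proj_concat_notMem_image (hso hσ) hσV⟩
  rcases List.prefix_concat_iff.mp hds with rfl | hds
  · exact hd
  · exact absurd ⟨hd, Lang.of_prefix hs hds⟩ (Set.eq_empty_iff_forall_notMem.mp hLdV d)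

lemma attackPair_of_attacked_step (hnormA : ScA ⊆ SoA) (hso : ScA ⊆ So)
    (hLdV : Ldmg ∩ LVG LG So V = ∅) (hsucc : Successful LG So V ScA SoA Att Ldmg)
    {s : List A} {σ : A} (hs : s ∈ LVG LG So V)
    (he : EnabledByAttacker ScA SoA V Att (proj So s))
    (hσA : σ ∈ Att (phat V SoA (proj So s))) (hσ : σ ∈ ScA) (hσV : σ ∉ V (proj So s))
    (hsσ : s ++ [σ] ∈ LG) : AttackPair LG So V ScA SoA Ldmg s σ := by
  refine ⟨hs, hσ, mem_Ldmg_of_attacked_step hso hLdV hsucc hs he hσA hσ hσV hsσ, ?_⟩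
  intro s' hs' hph hs'σ
  exact mem_Ldmg_of_attacked_step hso hLdV hsucc hs' (he.of_phat_eq hnormA hph) (hph ▸ hσA) hσ
    (V_eq_of_phat_eq hph ▸ hσV) hs'σ

lemma mem_V_or_attackPair (hAtt : ∀ x, Att x ⊆ ScA) (hnormA : ScA ⊆ SoA) (hso : ScA ⊆ So)
    (hLdV : Ldmg ∩ LVG LG So V = ∅) (hsucc : Successful LG So V ScA SoA Att Ldmg)
    {s : List A} {σ : A} (hs : s ∈ LVAG LG So V ScA SoA Att)
    (hobs : proj So s ∈ proj So '' LVG LG So V) (hσ : σ ∈ VA V ScA SoA Att (proj So s))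
    (hsσ : s ++ [σ] ∈ LG) : σ ∈ V (proj So s) ∨ AttackPair LG So V ScA SoA Ldmg s σ := by
  by_cases hσV : σ ∈ V (proj So s)
  · exact .inl hσV
  have hσA : σ ∈ Att (phat V SoA (proj So s)) := hσ.resolve_left fun h => hσV h.1
  exact .inr <| attackPair_of_attacked_step hnormA hso hLdV hsucc
    (mem_LVG_of_mem_LVAG hAtt hso hs hobs) (enabledByAttacker_of_mem_LVAG hs) hσA (hAtt _ hσA)
    hσV hsσ

lemma mem_VA_Asup_of_mem_V {s : List A} {σ : A} (hs : s ∈ LVG LG So V)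
    (hσ : σ ∈ V (proj So s)) :
    σ ∈ VA V ScA SoA (Asup LG So V ScA SoA Ldmg) (proj So s) := by
  by_cases hσA : σ ∈ ScA
  · exact .inr (.inl ⟨s, hs, rfl, hσ, hσA⟩)
  · exact .inl ⟨hσ, hσA⟩

lemma mem_VA_Asup_of_attackPair {s : List A} {σ : A}
    (h : AttackPair LG So V ScA SoA Ldmg s σ) :
    σ ∈ VA V ScA SoA (Asup LG So V ScA SoA Ldmg) (proj So s) :=
  .inr (.inr ⟨h.2.1, s, h.1, rfl, h⟩)

theorem LVAG_subset_LVAG_Asup (hAtt : ∀ x, Att x ⊆ ScA) (hnormA : ScA ⊆ SoA)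
    (hso : ScA ⊆ So) (hLdV : Ldmg ∩ LVG LG So V = ∅)
    (hsucc : Successful LG So V ScA SoA Att Ldmg) :
    LVAG LG So V ScA SoA Att ⊆ LVAG LG So V ScA SoA (Asup LG So V ScA SoA Ldmg) := by
  intro t ht
  induction ht with
  | nil => exact .nil
  | @snoc s σ hs hσ hsσ ih =>
    refine .snoc ih ⟨hσ.1, ?_⟩ hsσ
    rcases mem_V_or_attackPair hAtt hnormA hso hLdV hsucc hs hσ.1 hσ.2 hsσ with hσV | hap
    · exact mem_VA_Asup_of_mem_V (mem_LVG_of_mem_LVAG hAtt hso hs hσ.1) hσV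
    · exact mem_VA_Asup_of_attackPair hap

theorem LVAG_subset_LVG_union_En (hAtt : ∀ x, Att x ⊆ ScA) (hnormA : ScA ⊆ SoA)
    (hso : ScA ⊆ So) (hLdV : Ldmg ∩ LVG LG So V = ∅)
    (hsucc : Successful LG So V ScA SoA Att Ldmg) :
    LVAG LG So V ScA SoA Att ⊆
      LVG LG So V ∪
        ⋃ p ∈ {p : List A × A | AttackPair LG So V ScA SoA Ldmg p.1 p.2},
          En LG So V SoA p.1 p.2 := by
  intro t ht
  cases ht with
  | nil => exact .inl .nil
  | @snoc s σ hs hσ hsσ =>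
    have hsV := mem_LVG_of_mem_LVAG hAtt hso hs hσ.1
    rcases mem_V_or_attackPair hAtt hnormA hso hLdV hsucc hs hσ.1 hσ.2 hsσ with hσV | hap
    · exact .inl (.snoc hsV hσV hsσ)
    · exact .inr (Set.mem_biUnion (x := (s, σ)) hap ⟨s, hsV, rfl, hsσ, rfl⟩)

theorem stmt_16_general {A : Type*} (So : Set A) (LG : Set (List A))
    (V : List A → Set A)
    (ScA SoA : Set A) (hoA : SoA ⊆ So)
    (hnormA : ScA ⊆ SoA)
    (Ldmg : Set (List A))
    (hLdV : Ldmg ∩ LVG LG So V = ∅)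
    (Att : List (List A × Set A) → Set A) (hAtt : ∀ x, Att x ⊆ ScA)
    (hsucc : Successful LG So V ScA SoA Att Ldmg) :
    LVAG LG So V ScA SoA Att ⊆
      LVAG LG So V ScA SoA (Asup LG So V ScA SoA Ldmg) ∧
    LVAG LG So V ScA SoA Att ⊆
      LVG LG So V ∪
        ⋃ p ∈ {p : List A × A | AttackPair LG So V ScA SoA Ldmg p.1 p.2},
          En LG So V SoA p.1 p.2 :=
  ⟨LVAG_subset_LVAG_Asup hAtt hnormA (hnormA.trans hoA) hLdV hsucc,
    LVAG_subset_LVG_union_En hAtt hnormA (hnormA.trans hoA) hLdV hsucc⟩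

/-- If `AP_dmg ≠ ∅`, then for every successful attacker `A`,
`L(V_A/G) ⊆ L(V_{A^sup}/G)`; in particular
`L(V_A/G) ⊆ L(V/G) ∪ ⋃_{(s,σ)∈AP_dmg} En(s,σ)`. -/
theorem stmt_16 {A : Type*} [Fintype A] (So Sc : Set A) (LG : Set (List A))
    (hnil : [] ∈ LG) (hpref : ∀ s t : List A, s <+: t → t ∈ LG → s ∈ LG)
    (V : List A → Set A) (hV : ∀ w, Scᶜ ⊆ V w)
    (hnormV : Sc ⊆ So)
    (ScA SoA : Set A) (hcA : ScA ⊆ Sc) (hoA : SoA ⊆ So)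
    (hnormA : ScA ⊆ SoA)
    (Ldmg : Set (List A)) (hLd : Ldmg ⊆ LG)
    (hLdV : Ldmg ∩ LVG LG So V = ∅)
    (hAP : ∃ s σ, AttackPair LG So V ScA SoA Ldmg s σ)
    (Att : List (List A × Set A) → Set A) (hAtt : ∀ x, Att x ⊆ ScA)
    (hsucc : Successful LG So V ScA SoA Att Ldmg) :
    LVAG LG So V ScA SoA Att ⊆
      LVAG LG So V ScA SoA (Asup LG So V ScA SoA Ldmg) ∧
    LVAG LG So V ScA SoA Att ⊆
      LVG LG So V ∪
        ⋃ p ∈ {p : List A × A | AttackPair LG So V ScA SoA Ldmg p.1 p.2},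
          En LG So V SoA p.1 p.2 :=
  stmt_16_general So LG V ScA SoA hoA hnormA Ldmg hLdV Att hAtt hsucc

end ActuatorAttack
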